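/- arXiv:2505.11103 — 2 statements merged into one kernel-verified Lean document; each statement's English description precedes it below -/
import Mathlib

section
/- Let Q̃ be the 3×3 real symmetric matrix with Q̃₁₁ = k²(μe+μc)/ρ, Q̃₂₂ = (k²·μe·Lc²·(2α₁+α₃) + 4μc)/(ρ·j·μe·τc²), Q̃₃₃ = (k²·μe·Lc²·(α₁+α₂) + 4μc)/(ρ·j·μe·τc²), Q̃₁₃ = Q̃₃₁ = −2k·μc/(ρ·√(j·μe·τc²)), and all other entries zero. If ρ>0, j>0, τc>0, Lc>0, k>0 and μe>0, μc>0, α₁+α₂>0, 2α₁+α₃>0, then all eigenvalues of Q̃ are real and strictly positive. -/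
/-! The tensor is the orthogonal sum of the `1 × 1` block `Q̃₂₂` and the `2 × 2` block on the
coordinates `1, 3`, so it is positive definite as soon as `Q̃₂₂ > 0`, `Q̃₁₁ > 0` and
`Q̃₁₃² < Q̃₁₁ Q̃₃₃`. The last inequality reduces to `(μe + μc) · 4μc - 4μc² = 4 μe μc > 0`. -/

open Matrix

lemma quadratic_form_pos_of_sq_lt_mul {A B C u v : ℝ} (hA : 0 < A) (hBAC : B ^ 2 < A * C)
    (huv : u ≠ 0 ∨ v ≠ 0) : 0 < A * u ^ 2 + 2 * B * u * v + C * v ^ 2 := by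
  have hsq : A * (A * u ^ 2 + 2 * B * u * v + C * v ^ 2)
      = (A * u + B * v) ^ 2 + (A * C - B ^ 2) * v ^ 2 := by ring
  have hmul : 0 < A * (A * u ^ 2 + 2 * B * u * v + C * v ^ 2) := by
    rw [hsq]
    rcases eq_or_ne v 0 with rfl | hv
    · have hu : u ≠ 0 := huv.resolve_right (not_not.mpr rfl)
      have hAu : A * u ≠ 0 := mul_ne_zero hA.ne' hu
      simp only [mul_zero, zero_pow two_ne_zero, add_zero]
      positivity
    · have : 0 < (A * C - B ^ 2) * v ^ 2 := mul_pos (by linarith) (by positivity)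
      positivity
  exact pos_of_mul_pos_right hmul hA.le

lemma posDef_fin_three_of_pos_of_sq_lt_mul {A B C D : ℝ} (hA : 0 < A) (hD : 0 < D) (hBAC : B ^ 2 < A * C) :
    (!![A, 0, B; 0, D, 0; B, 0, C] : Matrix (Fin 3) (Fin 3) ℝ).PosDef := by
  refine PosDef.of_dotProduct_mulVec_pos ?_ fun x hx => ?_
  · ext i i'
    fin_cases i <;> fin_cases i' <;> simp
  have hform : star x ⬝ᵥ (!![A, 0, B; 0, D, 0; B, 0, C] *ᵥ x)
      = (A * x 0 ^ 2 + 2 * B * x 0 * x 2 + C * x 2 ^ 2) + D * x 1 ^ 2 := by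
    simp only [dotProduct, Pi.star_apply, star_trivial, mulVec, of_apply, cons_val', cons_val_fin_one,
      Fin.sum_univ_three, cons_val_zero, cons_val_one, cons_val, zero_mul, add_zero, zero_add]
    ring
  rw [hform]
  by_cases h02 : x 0 = 0 ∧ x 2 = 0
  · have h1 : x 1 ≠ 0 := fun h1 => hx (by ext i; fin_cases i <;> simp [h02.1, h02.2, h1])
    simp only [h02.1, h02.2, mul_zero, zero_pow two_ne_zero, add_zero, zero_add]
    positivity
  · have := quadratic_form_pos_of_sq_lt_mul hA hBAC (not_and_or.mp h02)
    positivity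

lemma cosserat_coupling_sq_lt_mul {ρ j τc Lc k μe μc α : ℝ} (hρ : 0 < ρ) (hj : 0 < j)
    (hτc : 0 < τc) (hk : k ≠ 0) (hμe : 0 < μe) (hμc : 0 < μc) (hα : 0 ≤ α) :
    (-2*k*μc/(ρ*Real.sqrt (j*μe*τc^2))) ^ 2
      < k^2*(μe+μc)/ρ * ((k^2*μe*Lc^2*α + 4*μc)/(ρ*j*μe*τc^2)) := by
  have hsqrt : Real.sqrt (j*μe*τc^2) ^ 2 = j*μe*τc^2 := Real.sq_sqrt (by positivity)
  have hgap : k^2*(μe+μc)/ρ * ((k^2*μe*Lc^2*α + 4*μc)/(ρ*j*μe*τc^2))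
        - (-2*k*μc/(ρ*Real.sqrt (j*μe*τc^2))) ^ 2
      = k^2 * (k^2*μe*Lc^2*α*(μe+μc) + 4*μe*μc) / (ρ^2*(j*μe*τc^2)) := by
    rw [div_pow, mul_pow ρ, hsqrt]
    field_simp
    ring
  have : 0 < k^2 * (k^2*μe*Lc^2*α*(μe+μc) + 4*μe*μc) / (ρ^2*(j*μe*τc^2)) := by positivity
  linarith

theorem cosserat_acoustic_tensor_eigenvalues_pos_general
    (ρ j τc Lc k μe μc α₁ α₂ α₃ : ℝ)
    (hρ : 0 < ρ) (hj : 0 < j) (hτc : 0 < τc) (hk : 0 < k)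
    (hμe : 0 < μe) (hμc : 0 < μc) (h12 : 0 < α₁ + α₂) (h13 : 0 < 2*α₁ + α₃) :
    ∃ hQ : (!![k^2*(μe+μc)/ρ, 0, -2*k*μc/(ρ*Real.sqrt (j*μe*τc^2));
               0, (k^2*μe*Lc^2*(2*α₁+α₃) + 4*μc)/(ρ*j*μe*τc^2), 0;
               -2*k*μc/(ρ*Real.sqrt (j*μe*τc^2)), 0,
               (k^2*μe*Lc^2*(α₁+α₂) + 4*μc)/(ρ*j*μe*τc^2)] :
               Matrix (Fin 3) (Fin 3) ℝ).IsHermitian,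
      ∀ i, 0 < hQ.eigenvalues i := by
  have hQ₁₁ : 0 < k^2*(μe+μc)/ρ := by positivity
  have hQ₂₂ : 0 < (k^2*μe*Lc^2*(2*α₁+α₃) + 4*μc)/(ρ*j*μe*τc^2) := by positivity
  have hPD := posDef_fin_three_of_pos_of_sq_lt_mul hQ₁₁ hQ₂₂
    (cosserat_coupling_sq_lt_mul (Lc := Lc) hρ hj hτc hk.ne' hμe hμc h12.le)
  exact ⟨hPD.isHermitian, hPD.eigenvalues_pos⟩

theorem cosserat_acoustic_tensor_eigenvalues_pos
    (ρ j τc Lc k μe μc α₁ α₂ α₃ : ℝ)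
    (hρ : 0 < ρ) (hj : 0 < j) (hτc : 0 < τc) (hLc : 0 < Lc) (hk : 0 < k)
    (hμe : 0 < μe) (hμc : 0 < μc) (h12 : 0 < α₁ + α₂) (h13 : 0 < 2*α₁ + α₃) :
    ∃ hQ : (!![k^2*(μe+μc)/ρ, 0, -2*k*μc/(ρ*Real.sqrt (j*μe*τc^2));
               0, (k^2*μe*Lc^2*(2*α₁+α₃) + 4*μc)/(ρ*j*μe*τc^2), 0;
               -2*k*μc/(ρ*Real.sqrt (j*μe*τc^2)), 0,
               (k^2*μe*Lc^2*(α₁+α₂) + 4*μc)/(ρ*j*μe*τc^2)] :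
               Matrix (Fin 3) (Fin 3) ℝ).IsHermitian,
      ∀ i, 0 < hQ.eigenvalues i :=
  cosserat_acoustic_tensor_eigenvalues_pos_general ρ j τc Lc k μe μc α₁ α₂ α₃ hρ hj hτc hk hμe hμc
    h12 h13
end

section
/- If M: [a,b] → Hermitian n×n matrices is differentiable with M'(v) negative definite for all v, then each eigenvalue function λ_j(v) (ordered increasingly) is strictly decreasing on [a,b]. -/
/-!
For `v₁ < v₂` the matrix `M v₁ - M v₂` is positive definite, since for `x ≠ 0` the real function
`v ↦ xᴴ M(v) x` has derivative `xᴴ M'(v) x < 0`. Weyl's monotonicity principle then compares the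
`j`-th eigenvalues: asking `x` to have no component along the eigenvectors of `M v₁` carrying
its eigenvalues of rank `> j`, nor along those of `M v₂` carrying its eigenvalues of rank `< j`,
imposes `n - 1` linear conditions, so some `x ≠ 0` satisfies them all, and for it
`λ_j(v₂) ‖x‖² ≤ xᴴ M(v₂) x < xᴴ M(v₁) x ≤ λ_j(v₁) ‖x‖²`.
-/

open Matrix Set ComplexOrder

namespace Matrix

variable {𝕜 ι : Type*} [RCLike 𝕜] [Fintype ι]

lemma star_mulVec_dotProduct_mulVec_mulVec (B C : Matrix ι ι 𝕜) (x : ι → 𝕜) :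
    star (B *ᵥ x) ⬝ᵥ (C *ᵥ (B *ᵥ x)) = star x ⬝ᵥ ((Bᴴ * C * B) *ᵥ x) := by
  simp only [star_mulVec, dotProduct_mulVec, vecMul_vecMul, mulVec_mulVec, Matrix.mul_assoc]

lemma star_dotProduct_diagonal_mulVec [DecidableEq ι] (d y : ι → 𝕜) :
    star y ⬝ᵥ (diagonal d *ᵥ y) = ∑ i, d i * (star (y i) * y i) := by
  simp only [dotProduct, mulVec_diagonal, Pi.star_apply]
  exact Finset.sum_congr rfl fun i _ => by ring

end Matrix

lemma LinearMap.exists_ne_zero_forall_apply_eq_zero {K V ι : Type*} [Field K] [AddCommGroup V]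
    [Module K V] [FiniteDimensional K V] [Fintype ι] (f : ι → V →ₗ[K] K)
    (hcard : Fintype.card ι < Module.finrank K V) : ∃ x ≠ 0, ∀ i, f i x = 0 := by
  have hker : LinearMap.ker (LinearMap.pi f) ≠ ⊥ :=
    LinearMap.ker_ne_bot_of_finrank_lt (by simpa using hcard)
  obtain ⟨x, hx, hx0⟩ := Submodule.exists_mem_ne_zero_of_ne_bot hker
  exact ⟨x, hx0, fun i => congr_fun (LinearMap.mem_ker.mp hx) i⟩

namespace Matrix.IsHermitian

variable {𝕜 ι : Type*} [RCLike 𝕜] [Fintype ι] [DecidableEq ι] {A C : Matrix ι ι 𝕜}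

lemma star_dotProduct_mulVec_eq_sum (hA : A.IsHermitian) (x : ι → 𝕜) :
    star x ⬝ᵥ (A *ᵥ x) = ∑ i, (hA.eigenvalues i : 𝕜) *
      (star ((star (hA.eigenvectorUnitary : Matrix ι ι 𝕜) *ᵥ x) i) *
        (star (hA.eigenvectorUnitary : Matrix ι ι 𝕜) *ᵥ x) i) := by
  rw [← star_dotProduct_diagonal_mulVec, star_mulVec_dotProduct_mulVec_mulVec,
    ← star_eq_conjTranspose, star_star]
  conv_lhs => rw [hA.spectral_theorem, Unitary.conjStarAlgAut_apply]
  rfl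

lemma star_dotProduct_self_eq_sum (hA : A.IsHermitian) (x : ι → 𝕜) :
    star x ⬝ᵥ x = ∑ i, star ((star (hA.eigenvectorUnitary : Matrix ι ι 𝕜) *ᵥ x) i) *
        (star (hA.eigenvectorUnitary : Matrix ι ι 𝕜) *ᵥ x) i := by
  have := star_mulVec_dotProduct_mulVec_mulVec (star (hA.eigenvectorUnitary : Matrix ι ι 𝕜)) 1 x
  rw [one_mulVec, ← star_eq_conjTranspose, star_star, Matrix.mul_one,
    mem_unitaryGroup_iff.mp hA.eigenvectorUnitary.2, one_mulVec] at this
  rw [← this]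
  rfl

lemma star_dotProduct_mulVec_le (hA : A.IsHermitian) {c : ℝ} {x : ι → 𝕜}
    (hx : ∀ i, c < hA.eigenvalues i → (star (hA.eigenvectorUnitary : Matrix ι ι 𝕜) *ᵥ x) i = 0) :
    star x ⬝ᵥ (A *ᵥ x) ≤ c * (star x ⬝ᵥ x) := by
  rw [hA.star_dotProduct_mulVec_eq_sum, hA.star_dotProduct_self_eq_sum, Finset.mul_sum]
  refine Finset.sum_le_sum fun i _ => ?_
  by_cases hi : c < hA.eigenvalues i
  · simp [hx i hi]
  · exact mul_le_mul_of_nonneg_right (RCLike.ofReal_le_ofReal.mpr (not_lt.mp hi))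
      (star_mul_self_nonneg _)

lemma le_star_dotProduct_mulVec (hA : A.IsHermitian) {c : ℝ} {x : ι → 𝕜}
    (hx : ∀ i, hA.eigenvalues i < c → (star (hA.eigenvectorUnitary : Matrix ι ι 𝕜) *ᵥ x) i = 0) :
    c * (star x ⬝ᵥ x) ≤ star x ⬝ᵥ (A *ᵥ x) := by
  rw [hA.star_dotProduct_mulVec_eq_sum, hA.star_dotProduct_self_eq_sum, Finset.mul_sum]
  refine Finset.sum_le_sum fun i _ => ?_
  by_cases hi : hA.eigenvalues i < c
  · simp [hx i hi]
  · exact mul_le_mul_of_nonneg_right (RCLike.ofReal_le_ofReal.mpr (not_lt.mp hi))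
      (star_mul_self_nonneg _)

def IsSortedEigenvalues {n : ℕ} (hA : A.IsHermitian) (l : Fin n → ℝ) : Prop :=
  Monotone l ∧ ∃ σ : Fin n ≃ ι, ∀ i, l i = hA.eigenvalues (σ i)

theorem IsSortedEigenvalues.lt_of_posDef_sub {n : ℕ} {hA : A.IsHermitian} {hC : C.IsHermitian}
    {lA lC : Fin n → ℝ} (hlA : hA.IsSortedEigenvalues lA) (hlC : hC.IsSortedEigenvalues lC)
    (hAC : (A - C).PosDef) (j : Fin n) : lC j < lA j := by
  obtain ⟨hmA, σA, hσA⟩ := hlA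
  obtain ⟨hmC, σC, hσC⟩ := hlC
  set U := star (hA.eigenvectorUnitary : Matrix ι ι 𝕜)
  set V := star (hC.eigenvectorUnitary : Matrix ι ι 𝕜)
  have hcard : Fintype.card {i : Fin n // i ≠ j} < Module.finrank 𝕜 (ι → 𝕜) := by
    rw [Fintype.card_subtype_compl, Fintype.card_subtype_eq, Fintype.card_fin,
      Module.finrank_fintype_fun_eq_card, Fintype.card_congr σA.symm, Fintype.card_fin]
    exact Nat.sub_lt j.pos one_pos
  obtain ⟨x, hx0, hx⟩ := LinearMap.exists_ne_zero_forall_apply_eq_zero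
    (fun i : {i : Fin n // i ≠ j} => if j < i.1 then (LinearMap.proj (σA i)).comp (mulVecLin U)
      else (LinearMap.proj (σC i)).comp (mulVecLin V)) hcard
  have hupper : ∀ k, lA j < hA.eigenvalues k → (U *ᵥ x) k = 0 := by
    intro k hk
    have hjk : j < σA.symm k := hmA.reflect_lt (by rwa [hσA (σA.symm k), σA.apply_symm_apply])
    simpa [hjk] using hx ⟨σA.symm k, hjk.ne'⟩
  have hlower : ∀ k, hC.eigenvalues k < lC j → (V *ᵥ x) k = 0 := by
    intro k hk
    have hkj : σC.symm k < j := hmC.reflect_lt (by rwa [hσC (σC.symm k), σC.apply_symm_apply])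
    simpa [hkj.not_gt] using hx ⟨σC.symm k, hkj.ne⟩
  have hx2 : 0 < star x ⬝ᵥ x := dotProduct_star_self_pos_iff.mpr hx0
  have : (lC j : 𝕜) * (star x ⬝ᵥ x) < lA j * (star x ⬝ᵥ x) := calc
    _ ≤ star x ⬝ᵥ (C *ᵥ x) := hC.le_star_dotProduct_mulVec hlower
    _ < star x ⬝ᵥ (A *ᵥ x) := by
      simpa [sub_mulVec, dotProduct_sub] using hAC.dotProduct_mulVec_pos hx0
    _ ≤ _ := hA.star_dotProduct_mulVec_le hupper
  exact RCLike.ofReal_lt_ofReal.mp (lt_of_mul_lt_mul_right this hx2.le)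

end Matrix.IsHermitian

section Derivative

variable {𝕜 ι : Type*} [RCLike 𝕜] [Fintype ι]

lemma hasDerivAt_star_dotProduct_mulVec {M M' : ℝ → Matrix ι ι 𝕜} {v : ℝ}
    (hM : ∀ i j, HasDerivAt (fun w => M w i j) (M' v i j) v) (x : ι → 𝕜) :
    HasDerivAt (fun w => star x ⬝ᵥ (M w *ᵥ x)) (star x ⬝ᵥ (M' v *ᵥ x)) v := by
  simp only [dotProduct, mulVec, Finset.mul_sum]
  exact HasDerivAt.fun_sum fun i _ => HasDerivAt.fun_sum fun k _ =>
    ((hM i k).mul_const (x k)).const_mul (star (x i))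

lemma posDef_sub_of_hasDerivAt_of_posDef_neg {M M' : ℝ → Matrix ι ι 𝕜} {s : Set ℝ}
    (hs : Convex ℝ s) (hherm : ∀ v ∈ s, (M v).IsHermitian)
    (hderiv : ∀ v ∈ s, ∀ i j, HasDerivAt (fun w => M w i j) (M' v i j) v)
    (hneg : ∀ v ∈ s, (-(M' v)).PosDef) {v₁ v₂ : ℝ} (hv₁ : v₁ ∈ s) (hv₂ : v₂ ∈ s)
    (hlt : v₁ < v₂) : (M v₁ - M v₂).PosDef := by
  refine .of_dotProduct_mulVec_pos ((hherm v₁ hv₁).sub (hherm v₂ hv₂)) fun x hx => ?_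
  have hf : ∀ v ∈ s, HasDerivAt (fun w => RCLike.re (star x ⬝ᵥ (M w *ᵥ x)))
      (RCLike.re (star x ⬝ᵥ (M' v *ᵥ x))) v := fun v hv =>
    (RCLike.reCLM (K := 𝕜)).hasFDerivAt.comp_hasDerivAt v
      (hasDerivAt_star_dotProduct_mulVec (hderiv v hv) x)
  have hanti : StrictAntiOn (fun w => RCLike.re (star x ⬝ᵥ (M w *ᵥ x))) s := by
    refine strictAntiOn_of_deriv_neg hs
      (fun v hv => (hf v hv).continuousAt.continuousWithinAt) fun v hv => ?_
    have hv' := interior_subset hv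
    have := RCLike.pos_iff.mp ((hneg v hv').dotProduct_mulVec_pos hx)
    rw [(hf v hv').deriv]
    simpa [neg_mulVec, dotProduct_neg] using this.1
  rw [sub_mulVec, dotProduct_sub, RCLike.pos_iff, map_sub, map_sub,
    (hherm v₁ hv₁).im_star_dotProduct_mulVec_self, (hherm v₂ hv₂).im_star_dotProduct_mulVec_self]
  exact ⟨sub_pos.mpr (hanti hv₁ hv₂ hlt), sub_zero 0⟩

end Derivative

theorem eigenvalues_strictAnti_of_deriv_negdef_general (n : ℕ) (a b : ℝ)
    (M M' : ℝ → Matrix (Fin n) (Fin n) ℂ)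
    (hherm : ∀ v, v ∈ Icc a b → (M v).IsHermitian)
    (hderiv : ∀ v ∈ Icc a b, ∀ i j, HasDerivAt (fun w => M w i j) (M' v i j) v)
    (hneg : ∀ v ∈ Icc a b, (-(M' v)).PosDef)
    (lam : ℝ → Fin n → ℝ)
    (hlam : ∀ (v : ℝ) (hv : v ∈ Icc a b), Monotone (lam v) ∧
      ∃ σ : Equiv.Perm (Fin n), ∀ i, lam v i = (hherm v hv).eigenvalues (σ i)) :
    ∀ j : Fin n, StrictAntiOn (fun v => lam v j) (Icc a b) := by
  intro j v₁ hv₁ v₂ hv₂ hlt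
  exact IsHermitian.IsSortedEigenvalues.lt_of_posDef_sub (hlam v₁ hv₁) (hlam v₂ hv₂)
    (posDef_sub_of_hasDerivAt_of_posDef_neg (convex_Icc a b) hherm hderiv hneg hv₁ hv₂ hlt) j

theorem eigenvalues_strictAnti_of_deriv_negdef (n : ℕ) (a b : ℝ) (hab : a < b)
    (M M' : ℝ → Matrix (Fin n) (Fin n) ℂ)
    (hherm : ∀ v, v ∈ Icc a b → (M v).IsHermitian)
    (hderiv : ∀ v ∈ Icc a b, ∀ i j, HasDerivAt (fun w => M w i j) (M' v i j) v)
    (hneg : ∀ v ∈ Icc a b, (-(M' v)).PosDef)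
    (lam : ℝ → Fin n → ℝ)
    (hlam : ∀ (v : ℝ) (hv : v ∈ Icc a b), Monotone (lam v) ∧
      ∃ σ : Equiv.Perm (Fin n), ∀ i, lam v i = (hherm v hv).eigenvalues (σ i)) :
    ∀ j : Fin n, StrictAntiOn (fun v => lam v j) (Icc a b) :=
  eigenvalues_strictAnti_of_deriv_negdef_general n a b M M' hherm hderiv hneg lam hlam
end
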